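/- Assume the continuum hypothesis (𝔠 = ℵ₁). If U and V are real Banach spaces of universal disposition for separable spaces whose density characters equal ℵ₁, then U and V are isometrically isomorphic: there exists a surjective linear isometry U → V. -/

import Mathlib

open Cardinal

/-- A real Banach space `U` is of universal disposition for separable spaces if for every
pair of separable real Banach spaces `A` and `B`, every linear isometric embedding
`u : A → U` and every linear isometric embedding `j : A → B`, there is a linear isometric
embedding `u' : B → U` with `u' ∘ j = u`. -/
def UnivDispSeparable (U : Type*) [NormedAddCommGroup U] [NormedSpace ℝ U] : Prop :=
  ∀ (A B : Type) [NormedAddCommGroup A] [NormedSpace ℝ A] [CompleteSpace A]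
    [TopologicalSpace.SeparableSpace A]
    [NormedAddCommGroup B] [NormedSpace ℝ B] [CompleteSpace B]
    [TopologicalSpace.SeparableSpace B]
    (u : A →ₗᵢ[ℝ] U) (j : A →ₗᵢ[ℝ] B),
    ∃ u' : B →ₗᵢ[ℝ] U, ∀ a : A, u' (j a) = u a

/-- The density character of a topological space: the least cardinality of a dense subset. -/
noncomputable def densityCharacter (X : Type*) [TopologicalSpace X] : Cardinal :=
  sInf {c : Cardinal | ∃ D : Set X, Dense D ∧ #D = c}

/-!
A back-and-forth argument of length `ω₁`. Enumerate dense subsets of `U` and `V` by the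
countable ordinals and build an increasing chain of separable subspaces of `U × V`, each the
graph of a linear isometry. At each step universal disposition of `V` enlarges the domain to
contain the next point of `U`, and universal disposition of `U`, applied to the transposed graph,
enlarges the range to contain the next point of `V`; the union of the earlier stages is still
separable because every initial segment of `ω₁` is countable. The closure of the union of the
whole chain is the graph of an isometry whose domain and range are dense and closed, hence full.
-/

open TopologicalSpace

universe u v

theorem small_of_separableSpace (X : Type*) [MetricSpace X] [SeparableSpace X] :
    Small.{0} X := by
  obtain ⟨s, hs, hsd⟩ := exists_countable_dense X
  have : Countable s := hs.to_subtype
  refine small_of_injective (f := fun x (d : s) => dist x d) fun x y hxy => ?_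
  have hdist : dist x = dist y :=
    Continuous.ext_on hsd (continuous_const.dist continuous_id)
      (continuous_const.dist continuous_id) fun d hd => congr_fun hxy ⟨d, hd⟩
  exact (dist_eq_zero.1 ((congr_fun hdist x).symm.trans (dist_self x))).symm

noncomputable def Shrink.linearIsometryEquiv (A : Type*) [NormedAddCommGroup A]
    [NormedSpace ℝ A] [Small.{0} A] : Shrink.{0} A ≃ₗᵢ[ℝ] A :=
  { Shrink.linearEquiv ℝ A with norm_map' := fun _ => rfl }

/-- `UnivDispSeparable` quantifies over `Type`; separable spaces are small, so it applies to
separable spaces in every universe. -/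
theorem UnivDispSeparable.exists_extension {E : Type*} [NormedAddCommGroup E]
    [NormedSpace ℝ E] (hE : UnivDispSeparable E) {A B : Type*}
    [NormedAddCommGroup A] [NormedSpace ℝ A] [CompleteSpace A] [SeparableSpace A]
    [NormedAddCommGroup B] [NormedSpace ℝ B] [CompleteSpace B] [SeparableSpace B]
    (u : A →ₗᵢ[ℝ] E) (j : A →ₗᵢ[ℝ] B) :
    ∃ u' : B →ₗᵢ[ℝ] E, ∀ a : A, u' (j a) = u a := by
  have : Small.{0} A := small_of_separableSpace A
  have : Small.{0} B := small_of_separableSpace B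
  let eA := Shrink.linearIsometryEquiv A
  let eB := Shrink.linearIsometryEquiv B
  have : CompleteSpace (Shrink.{0} A) := eA.toIsometryEquiv.completeSpace
  have : CompleteSpace (Shrink.{0} B) := eB.toIsometryEquiv.completeSpace
  have : SeparableSpace (Shrink.{0} A) :=
    eA.symm.surjective.denseRange.separableSpace eA.symm.continuous
  have : SeparableSpace (Shrink.{0} B) :=
    eB.symm.surjective.denseRange.separableSpace eB.symm.continuous
  obtain ⟨w, hw⟩ := hE (Shrink.{0} A) (Shrink.{0} B) (u.comp eA.toLinearIsometry)
    (eB.symm.toLinearIsometry.comp (j.comp eA.toLinearIsometry))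
  exact ⟨w.comp eB.symm.toLinearIsometry, fun a => by simpa using hw (eA.symm a)⟩

theorem TopologicalSpace.IsSeparable.iSup_submodule {M : Type*} [AddCommMonoid M] [Module ℝ M]
    [TopologicalSpace M] [ContinuousAdd M] [ContinuousSMul ℝ M] {ι : Type*} [Countable ι]
    {c : ι → Submodule ℝ M} (hc : ∀ i, IsSeparable (c i : Set M)) :
    IsSeparable ((⨆ i, c i : Submodule ℝ M) : Set M) := by
  rw [Submodule.iSup_eq_span]
  exact (isSeparable_iUnion.2 hc).span

theorem Isometry.surjective_of_denseRange {α β : Type*} [EMetricSpace α] [CompleteSpace α]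
    [EMetricSpace β] {f : α → β} (hf : Isometry f) (hd : DenseRange f) :
    Function.Surjective f := by
  rw [← Set.range_eq_univ, ← hf.isClosedEmbedding.isClosed_range.closure_eq]
  exact hd.closure_eq

section Graph

variable {E F : Type*} [NormedAddCommGroup E] [NormedSpace ℝ E]
  [NormedAddCommGroup F] [NormedSpace ℝ F]

/-- By linearity such a `W` is the graph of a linear isometry from its first projection onto its
second. -/
def IsIsometryGraph (W : Submodule ℝ (E × F)) : Prop :=
  ∀ p ∈ W, ‖p.1‖ = ‖p.2‖

namespace IsIsometryGraph

variable {W : Submodule ℝ (E × F)} (hW : IsIsometryGraph W)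
include hW

theorem norm_fst (p : W) : ‖(p : E × F).1‖ = ‖p‖ := by
  rw [Submodule.coe_norm, Prod.norm_def, ← hW p p.2, max_self]

def fst : W →ₗᵢ[ℝ] E where
  toLinearMap := LinearMap.fst ℝ E F ∘ₗ W.subtype
  norm_map' := hW.norm_fst

def snd : W →ₗᵢ[ℝ] F where
  toLinearMap := LinearMap.snd ℝ E F ∘ₗ W.subtype
  norm_map' p := (hW p p.2).symm.trans (hW.norm_fst p)

theorem topologicalClosure : IsIsometryGraph W.topologicalClosure := by
  have hclosed : IsClosed {p : E × F | ‖p.1‖ = ‖p.2‖} :=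
    isClosed_eq continuous_fst.norm continuous_snd.norm
  intro p hp
  rw [← SetLike.mem_coe, Submodule.topologicalClosure_coe] at hp
  exact closure_minimal hW hclosed hp

theorem map_prodComm : IsIsometryGraph (W.map (LinearEquiv.prodComm ℝ E F).toLinearMap) := by
  rintro _ ⟨p, hp, rfl⟩
  exact (hW p hp).symm

theorem nonempty_linearIsometryEquiv [CompleteSpace E] [CompleteSpace F]
    (hfst : Dense (W.map (LinearMap.fst ℝ E F) : Set E))
    (hsnd : Dense (W.map (LinearMap.snd ℝ E F) : Set F)) :
    Nonempty (E ≃ₗᵢ[ℝ] F) := by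
  have hW' := hW.topologicalClosure
  have : CompleteSpace W.topologicalClosure :=
    W.isClosed_topologicalClosure.completeSpace_coe
  have hle : W ≤ W.topologicalClosure := W.le_topologicalClosure
  have hfst' : DenseRange hW'.fst := hfst.mono <| by
    rintro _ ⟨p, hp, rfl⟩
    exact ⟨⟨p, hle hp⟩, rfl⟩
  have hsnd' : DenseRange hW'.snd := hsnd.mono <| by
    rintro _ ⟨p, hp, rfl⟩
    exact ⟨⟨p, hle hp⟩, rfl⟩
  exact ⟨(LinearIsometryEquiv.ofSurjective _
      (hW'.fst.isometry.surjective_of_denseRange hfst')).symm.trans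
    (LinearIsometryEquiv.ofSurjective _ (hW'.snd.isometry.surjective_of_denseRange hsnd'))⟩

end IsIsometryGraph

theorem IsIsometryGraph.comap_prodComm {W : Submodule ℝ (F × E)} (hW : IsIsometryGraph W) :
    IsIsometryGraph (W.comap (LinearEquiv.prodComm ℝ E F).toLinearMap) :=
  fun _ hp => (hW _ hp).symm

theorem isIsometryGraph_iSup {ι : Type*} {c : ι → Submodule ℝ (E × F)}
    (hc : ∀ i, IsIsometryGraph (c i)) (hdir : Directed (· ≤ ·) c) :
    IsIsometryGraph (⨆ i, c i) := by
  intro p hp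
  rcases isEmpty_or_nonempty ι with hι | hι
  · rw [iSup_of_empty, Submodule.mem_bot] at hp
    simp [hp]
  · obtain ⟨i, hi⟩ := (Submodule.mem_iSup_of_directed c hdir).1 hp
    exact hc i p hi

theorem isIsometryGraph_range_prod {A : Type*} [SeminormedAddCommGroup A] [NormedSpace ℝ A]
    (f : A →ₗᵢ[ℝ] E) (g : A →ₗᵢ[ℝ] F) :
    IsIsometryGraph (LinearMap.range (f.toLinearMap.prod g.toLinearMap)) := by
  rintro _ ⟨a, rfl⟩
  exact (f.norm_map a).trans (g.norm_map a).symm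

end Graph

section Extension

variable {E F : Type*} [NormedAddCommGroup E] [NormedSpace ℝ E] [CompleteSpace E]
  [NormedAddCommGroup F] [NormedSpace ℝ F] [CompleteSpace F]

theorem UnivDispSeparable.exists_le_fst_mem (hF : UnivDispSeparable F)
    {W : Submodule ℝ (E × F)} (hWs : IsSeparable (W : Set (E × F))) (hW : IsIsometryGraph W)
    (x : E) :
    ∃ W' : Submodule ℝ (E × F), IsSeparable (W' : Set (E × F)) ∧ IsIsometryGraph W' ∧
      W ≤ W' ∧ x ∈ W'.map (LinearMap.fst ℝ E F) := by
  set W₁ := W.topologicalClosure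
  have hW₁ := hW.topologicalClosure
  have : CompleteSpace W₁ := W.isClosed_topologicalClosure.completeSpace_coe
  have hW₁s : IsSeparable (W₁ : Set (E × F)) := by
    rw [Submodule.topologicalClosure_coe]; exact hWs.closure
  have : SeparableSpace W₁ := hW₁s.separableSpace
  set S := Prod.fst '' (W₁ : Set (E × F)) ∪ {x}
  set X := (Submodule.span ℝ S).topologicalClosure
  have : CompleteSpace X := (Submodule.isClosed_topologicalClosure _).completeSpace_coe
  have : SeparableSpace X := by
    refine IsSeparable.separableSpace ?_
    rw [Submodule.topologicalClosure_coe]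
    exact ((hW₁s.image continuous_fst).union (Set.countable_singleton x).isSeparable).span.closure
  have hX : ∀ y ∈ S, y ∈ X := fun y hy =>
    Submodule.le_topologicalClosure _ (Submodule.subset_span hy)
  let j : W₁ →ₗᵢ[ℝ] X :=
    { toLinearMap := hW₁.fst.toLinearMap.codRestrict X fun p => hX _ (.inl ⟨p, p.2, rfl⟩)
      norm_map' := hW₁.fst.norm_map }
  -- the new graph is that of an extension `ψ` of the isometry encoded by `W₁` to `X ∋ x`
  obtain ⟨ψ, hψ⟩ := hF.exists_extension hW₁.snd j
  set φ := X.subtypeₗᵢ.toLinearMap.prod ψ.toLinearMap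
  refine ⟨LinearMap.range φ, ?_, isIsometryGraph_range_prod _ _, fun p hp => ?_, ?_⟩
  · rw [LinearMap.coe_range]
    exact isSeparable_range (continuous_subtype_val.prodMk ψ.continuous)
  · refine ⟨j ⟨p, W.le_topologicalClosure hp⟩, Prod.ext rfl ?_⟩
    exact hψ ⟨p, W.le_topologicalClosure hp⟩
  · exact ⟨φ ⟨x, hX x (.inr rfl)⟩, LinearMap.mem_range_self _ _, rfl⟩

theorem UnivDispSeparable.exists_le_fst_mem_snd_mem (hE : UnivDispSeparable E)
    (hF : UnivDispSeparable F) {W : Submodule ℝ (E × F)} (hWs : IsSeparable (W : Set (E × F)))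
    (hW : IsIsometryGraph W) (x : E) (y : F) :
    ∃ W' : Submodule ℝ (E × F), IsSeparable (W' : Set (E × F)) ∧ IsIsometryGraph W' ∧
      W ≤ W' ∧ x ∈ W'.map (LinearMap.fst ℝ E F) ∧ y ∈ W'.map (LinearMap.snd ℝ E F) := by
  set σ := (LinearEquiv.prodComm ℝ E F).toLinearMap
  obtain ⟨W₁, hW₁s, hW₁, hWW₁, hx⟩ := hF.exists_le_fst_mem hWs hW x
  have hW₁s' : IsSeparable (W₁.map σ : Set (F × E)) := by
    rw [Submodule.map_coe]; exact hW₁s.image continuous_swap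
  obtain ⟨W₂, hW₂s, hW₂, hW₁W₂, hy⟩ := hE.exists_le_fst_mem hW₁s' hW₁.map_prodComm y
  have hW₁W₂' : W₁ ≤ W₂.comap σ := Submodule.map_le_iff_le_comap.1 hW₁W₂
  refine ⟨W₂.comap σ, ?_, hW₂.comap_prodComm, hWW₁.trans hW₁W₂', Submodule.map_mono hW₁W₂' hx, ?_⟩
  · rw [Submodule.comap_coe, show ⇑σ = Prod.swap from rfl, ← Set.image_swap_eq_preimage_swap]
    exact hW₂s.image continuous_swap
  · obtain ⟨q, hq, rfl⟩ := hy
    exact ⟨q.swap, hq, rfl⟩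

end Extension

section BackAndForth

variable {E F : Type*} [NormedAddCommGroup E] [NormedSpace ℝ E]
  [NormedAddCommGroup F] [NormedSpace ℝ F]

open Classical in
/-- Falling back to `W` when no extension exists makes `W ≤ backForthStep W x y` hold
unconditionally, so the chain below is monotone before anything else is known about it. -/
noncomputable def backForthStep (W : Submodule ℝ (E × F)) (x : E) (y : F) :
    Submodule ℝ (E × F) :=
  if h : ∃ W' : Submodule ℝ (E × F), IsSeparable (W' : Set (E × F)) ∧ IsIsometryGraph W' ∧
      W ≤ W' ∧ x ∈ W'.map (LinearMap.fst ℝ E F) ∧ y ∈ W'.map (LinearMap.snd ℝ E F)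
  then h.choose else W

theorem le_backForthStep (W : Submodule ℝ (E × F)) (x : E) (y : F) :
    W ≤ backForthStep W x y := by
  unfold backForthStep
  split_ifs with h
  exacts [h.choose_spec.2.2.1, le_rfl]

theorem backForthStep_spec [CompleteSpace E] [CompleteSpace F] (hE : UnivDispSeparable E)
    (hF : UnivDispSeparable F) {W : Submodule ℝ (E × F)} (hWs : IsSeparable (W : Set (E × F)))
    (hW : IsIsometryGraph W) (x : E) (y : F) :
    IsSeparable (backForthStep W x y : Set (E × F)) ∧ IsIsometryGraph (backForthStep W x y) ∧
      x ∈ (backForthStep W x y).map (LinearMap.fst ℝ E F) ∧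
      y ∈ (backForthStep W x y).map (LinearMap.snd ℝ E F) := by
  have h := hE.exists_le_fst_mem_snd_mem hF hWs hW x y
  obtain ⟨hs, hg, -, hx, hy⟩ := h.choose_spec
  rw [backForthStep, dif_pos h]
  exact ⟨hs, hg, hx, hy⟩

variable {ι : Type*} [LinearOrder ι] [WellFoundedLT ι] (eE : ι → E) (eF : ι → F)

noncomputable def backForthChain : ι → Submodule ℝ (E × F) :=
  wellFounded_lt.fix fun i c => backForthStep (⨆ j : Set.Iio i, c j j.2) (eE i) (eF i)

theorem backForthChain_eq (i : ι) :
    backForthChain eE eF i =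
      backForthStep (⨆ j : Set.Iio i, backForthChain eE eF j) (eE i) (eF i) :=
  wellFounded_lt.fix_eq _ i

theorem monotone_backForthChain : Monotone (backForthChain eE eF) := by
  intro j i hji
  rcases hji.eq_or_lt with rfl | hlt
  · rfl
  rw [backForthChain_eq eE eF i]
  exact (le_iSup (fun k : Set.Iio i => backForthChain eE eF k) ⟨j, hlt⟩).trans
    (le_backForthStep _ _ _)

variable {eE eF} [CompleteSpace E] [CompleteSpace F]

theorem backForthChain_spec (hE : UnivDispSeparable E) (hF : UnivDispSeparable F)
    (hι : ∀ i : ι, (Set.Iio i).Countable) (i : ι) :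
    IsSeparable (backForthChain eE eF i : Set (E × F)) ∧
      IsIsometryGraph (backForthChain eE eF i) ∧
      eE i ∈ (backForthChain eE eF i).map (LinearMap.fst ℝ E F) ∧
      eF i ∈ (backForthChain eE eF i).map (LinearMap.snd ℝ E F) := by
  induction i using WellFoundedLT.induction with
  | _ i ih =>
  have : Countable (Set.Iio i) := (hι i).to_subtype
  have hmono : Monotone fun j : Set.Iio i => backForthChain eE eF j :=
    (monotone_backForthChain eE eF).comp (Subtype.mono_coe _)
  rw [backForthChain_eq]
  exact backForthStep_spec hE hF (IsSeparable.iSup_submodule fun j : Set.Iio i => (ih j j.2).1)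
    (isIsometryGraph_iSup (fun j : Set.Iio i => (ih j j.2).2.1) hmono.directed_le) _ _

theorem UnivDispSeparable.nonempty_linearIsometryEquiv (hE : UnivDispSeparable E)
    (hF : UnivDispSeparable F) (hι : ∀ i : ι, (Set.Iio i).Countable)
    (hdE : DenseRange eE) (hdF : DenseRange eF) : Nonempty (E ≃ₗᵢ[ℝ] F) := by
  have hc := backForthChain_spec (eE := eE) (eF := eF) hE hF hι
  have hle : ∀ i, backForthChain eE eF i ≤ ⨆ i, backForthChain eE eF i := le_iSup _
  refine (isIsometryGraph_iSup (fun i => (hc i).2.1)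
    (monotone_backForthChain eE eF).directed_le).nonempty_linearIsometryEquiv ?_ ?_
  · exact hdE.mono (Set.range_subset_iff.2 fun i => Submodule.map_mono (hle i) (hc i).2.2.1)
  · exact hdF.mono (Set.range_subset_iff.2 fun i => Submodule.map_mono (hle i) (hc i).2.2.2)

end BackAndForth

theorem exists_denseRange_of_densityCharacter_le {X : Type u} [TopologicalSpace X] [Nonempty X]
    {ι : Type v} (h : lift.{v} (densityCharacter X) ≤ lift.{u} #ι) :
    ∃ e : ι → X, DenseRange e := by
  obtain ⟨D, hD, hDcard⟩ : ∃ D : Set X, Dense D ∧ #D = densityCharacter X :=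
    csInf_mem (s := {c | ∃ D : Set X, Dense D ∧ #D = c}) ⟨_, Set.univ, dense_univ, rfl⟩
  rw [← hDcard] at h
  obtain ⟨f⟩ := lift_mk_le'.1 h
  have : Nonempty D := hD.nonempty.to_subtype
  refine ⟨fun i => ((Function.invFun f i : D) : X), hD.mono ?_⟩
  rintro d hd
  exact ⟨f ⟨d, hd⟩, by simp [Function.leftInverse_invFun f.injective _]⟩

theorem countable_Iio_toType_ord_aleph_one (i : (aleph.{0} 1).ord.ToType) :
    (Set.Iio i).Countable :=
  le_aleph0_iff_set_countable.1 (lt_aleph_one_iff.1 (by simpa using mk_Iio_lt i (by simp)))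

theorem unique_univDispSeparable_of_CH_general
    (U : Type*) [NormedAddCommGroup U] [NormedSpace ℝ U] [CompleteSpace U]
    (V : Type*) [NormedAddCommGroup V] [NormedSpace ℝ V] [CompleteSpace V]
    (hU : UnivDispSeparable U) (hV : UnivDispSeparable V)
    (hUdens : densityCharacter U = Cardinal.aleph 1)
    (hVdens : densityCharacter V = Cardinal.aleph 1) :
    Nonempty (U ≃ₗᵢ[ℝ] V) := by
  obtain ⟨eU, hdU⟩ := exists_denseRange_of_densityCharacter_le (X := U)
    (ι := (aleph.{0} 1).ord.ToType) (by simp [hUdens])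
  obtain ⟨eV, hdV⟩ := exists_denseRange_of_densityCharacter_le (X := V)
    (ι := (aleph.{0} 1).ord.ToType) (by simp [hVdens])
  exact hU.nonempty_linearIsometryEquiv hV countable_Iio_toType_ord_aleph_one hdU hdV

/-- Under CH, any two Banach spaces of universal disposition for separable spaces with
density character `ℵ₁` are isometrically isomorphic. -/
theorem unique_univDispSeparable_of_CH
    (hCH : Cardinal.continuum.{0} = Cardinal.aleph 1)
    (U : Type*) [NormedAddCommGroup U] [NormedSpace ℝ U] [CompleteSpace U]
    (V : Type*) [NormedAddCommGroup V] [NormedSpace ℝ V] [CompleteSpace V]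
    (hU : UnivDispSeparable U) (hV : UnivDispSeparable V)
    (hUdens : densityCharacter U = Cardinal.aleph 1)
    (hVdens : densityCharacter V = Cardinal.aleph 1) :
    Nonempty (U ≃ₗᵢ[ℝ] V) :=
  unique_univDispSeparable_of_CH_general U V hU hV hUdens hVdens
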